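/- Let g(q) = ∑_{n=0}^∞ q^n a_n and f(q) = ∑_{n=1}^∞ q^n b_n be quaternionic power series with positive radii of convergence R and ρ respectively. If r > 0 satisfies ∑_{n=1}^∞ r^n ‖b_n‖ < R, then the bullet composition h = g • f, defined coefficientwise as a formal series, has radius of convergence at least r; in particular h has positive radius of convergence. -/

import Mathlib

/-- The bullet composition of formal power series over the quaternions:
`(f • w) = ∑_n w^{*n} aₙ` where `f = ∑ qⁿ aₙ`; since the constant coefficient of `w` is
required to be `0` in applications, each coefficient is a finite sum. -/
noncomputable def bulletComp (f w : PowerSeries (Quaternion ℝ)) :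
    PowerSeries (Quaternion ℝ) :=
  PowerSeries.mk fun n =>
    ∑ k ∈ Finset.range (n + 1),
      PowerSeries.coeff (R := Quaternion ℝ) n (w ^ k) * PowerSeries.coeff (R := Quaternion ℝ) k f


/-!
The coefficients of `wᵏ` are dominated in norm by those of `Nᵏ`, where `N = ∑ ‖bₙ‖ Xⁿ` is a
real series with nonnegative coefficients. Evaluated at `r`, `Nᵏ` sums to `Sᵏ` with
`S = ∑ rⁿ ‖bₙ‖ < R`, so the double series `∑ₖ ∑ₙ rⁿ [Xⁿ]Nᵏ ‖aₖ‖ = ∑ₖ Sᵏ ‖aₖ‖` converges;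
summing it in the other order dominates `∑ₙ ‖qⁿ [Xⁿ](g • f)‖` for `‖q‖ < r`.
-/

open PowerSeries Finset

namespace PowerSeries

section NormSeries

variable {R : Type*} [SeminormedRing R]

noncomputable def normSeries (φ : R⟦X⟧) : ℝ⟦X⟧ :=
  mk fun n => ‖coeff n φ‖

@[simp]
lemma coeff_normSeries (φ : R⟦X⟧) (n : ℕ) : coeff n φ.normSeries = ‖coeff n φ‖ :=
  coeff_mk _ _

lemma norm_coeff_mul_le (φ ψ : R⟦X⟧) (n : ℕ) :
    ‖coeff n (φ * ψ)‖ ≤ ∑ p ∈ antidiagonal n, ‖coeff p.1 φ‖ * ‖coeff p.2 ψ‖ := by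
  rw [coeff_mul]
  exact (norm_sum_le _ _).trans (sum_le_sum fun p _ => norm_mul_le _ _)

lemma norm_coeff_pow_le [NormOneClass R] (φ : R⟦X⟧) (k n : ℕ) :
    ‖coeff n (φ ^ k)‖ ≤ coeff n (φ.normSeries ^ k) := by
  induction k generalizing n with
  | zero => rw [pow_zero, pow_zero, coeff_one, coeff_one]; split_ifs <;> simp
  | succ k ih =>
    rw [pow_succ, pow_succ]
    refine (norm_coeff_mul_le _ _ n).trans ?_
    rw [coeff_mul]
    refine sum_le_sum fun p _ => ?_
    rw [coeff_normSeries φ]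
    exact mul_le_mul_of_nonneg_right (ih p.1) (norm_nonneg _)

end NormSeries

section RealEvaluation

variable {P Q : ℝ⟦X⟧} {r s t : ℝ}

lemma coeff_pow_nonneg (hP : ∀ n, 0 ≤ coeff n P) (k n : ℕ) : 0 ≤ coeff n (P ^ k) := by
  induction k generalizing n with
  | zero => rw [pow_zero, coeff_one]; split_ifs <;> norm_num
  | succ k ih =>
    rw [pow_succ, coeff_mul]
    exact sum_nonneg fun p _ => mul_nonneg (ih p.1) (hP p.2)

lemma hasSum_pow_mul_coeff_mul (hr : 0 ≤ r) (hP : ∀ n, 0 ≤ coeff n P) (hQ : ∀ n, 0 ≤ coeff n Q)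
    (hPs : HasSum (fun n => r ^ n * coeff n P) s) (hQt : HasSum (fun n => r ^ n * coeff n Q) t) :
    HasSum (fun n => r ^ n * coeff n (P * Q)) (s * t) := by
  set f := fun n => r ^ n * coeff n P
  set g := fun n => r ^ n * coeff n Q
  have hfg : Summable fun p : ℕ × ℕ => f p.1 * g p.2 :=
    hPs.summable.mul_of_nonneg hQt.summable (fun n => mul_nonneg (pow_nonneg hr n) (hP n))
      (fun n => mul_nonneg (pow_nonneg hr n) (hQ n))
  have hcauchy : ∀ n, r ^ n * coeff n (P * Q) = ∑ p ∈ antidiagonal n, f p.1 * g p.2 := by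
    intro n
    rw [coeff_mul, mul_sum]
    refine sum_congr rfl fun p hp => ?_
    rw [← mem_antidiagonal.mp hp, pow_add]
    ring
  simp only [hcauchy]
  rw [← hPs.tsum_eq, ← hQt.tsum_eq,
    hPs.summable.tsum_mul_tsum_eq_tsum_sum_antidiagonal hQt.summable hfg]
  exact (summable_sum_mul_antidiagonal_of_summable_mul hfg).hasSum

lemma hasSum_pow_mul_coeff_pow (hr : 0 ≤ r) (hP : ∀ n, 0 ≤ coeff n P)
    (hPs : HasSum (fun n => r ^ n * coeff n P) s) (k : ℕ) :
    HasSum (fun n => r ^ n * coeff n (P ^ k)) (s ^ k) := by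
  induction k with
  | zero =>
    simp only [pow_zero]
    convert hasSum_ite_eq 0 (1 : ℝ) using 2 with n
    rw [coeff_one]
    split_ifs with h <;> simp [h]
  | succ k ih =>
    rw [pow_succ, pow_succ]
    exact hasSum_pow_mul_coeff_mul hr (coeff_pow_nonneg hP k) hP ih hPs

end RealEvaluation

lemma norm_pow_mul_coeff_bulletComp_le (f w : PowerSeries (Quaternion ℝ)) {q : Quaternion ℝ}
    {r : ℝ} (hq : ‖q‖ ≤ r) (n : ℕ) :
    ‖q ^ n * coeff n (bulletComp f w)‖ ≤
      ∑ k ∈ range (n + 1), r ^ n * coeff n (w.normSeries ^ k) * ‖coeff k f‖ := by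
  have hcoeff : ‖coeff n (bulletComp f w)‖ ≤
      ∑ k ∈ range (n + 1), coeff n (w.normSeries ^ k) * ‖coeff k f‖ := by
    rw [bulletComp, coeff_mk]
    refine (norm_sum_le _ _).trans (sum_le_sum fun k _ => (norm_mul_le _ _).trans ?_)
    exact mul_le_mul_of_nonneg_right (norm_coeff_pow_le w k n) (norm_nonneg _)
  simp only [mul_assoc, ← mul_sum]
  rw [norm_mul, norm_pow]
  exact mul_le_mul (pow_le_pow_left₀ (norm_nonneg q) hq n) hcoeff (norm_nonneg _)
    (pow_nonneg ((norm_nonneg q).trans hq) n)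

end PowerSeries

lemma summable_pow_mul_norm_of_lt {A : Type*} [NormedRing A] [NormedAlgebra ℝ A] [NormOneClass A]
    [FiniteDimensional ℝ A] {a : ℕ → A} {R t : ℝ}
    (ha : ∀ q : A, ‖q‖ < R → Summable fun n => q ^ n * a n) (ht : 0 ≤ t) (htR : t < R) :
    Summable fun n => t ^ n * ‖a n‖ := by
  have hnorm : ‖algebraMap ℝ A t‖ = t := by rw [norm_algebraMap', Real.norm_of_nonneg ht]
  have hterm : ∀ n, ‖algebraMap ℝ A t ^ n * a n‖ = t ^ n * ‖a n‖ := fun n => by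
    rw [← map_pow, ← Algebra.smul_def, norm_smul, norm_pow, Real.norm_of_nonneg ht]
  exact (summable_norm_iff.mpr (ha _ (by rwa [hnorm]))).congr hterm

lemma summable_swap_of_nonneg {α β : Type*} {c : α → β → ℝ} (hc : ∀ a b, 0 ≤ c a b)
    (hrow : ∀ a, Summable (c a)) (htot : Summable fun a => ∑' b, c a b) :
    (∀ b, Summable fun a => c a b) ∧ Summable fun b => ∑' a, c a b := by
  have hprod : Summable fun p : α × β => c p.1 p.2 :=
    (summable_prod_of_nonneg fun p => hc p.1 p.2).2 ⟨hrow, htot⟩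
  exact (summable_prod_of_nonneg fun p => hc p.2 p.1).1 hprod.prod_symm

theorem stmt11_general (a b : ℕ → Quaternion ℝ) (R : ℝ)
    (hg : ∀ q : Quaternion ℝ, ‖q‖ < R → Summable (fun n : ℕ => q ^ n * a n))
    (r : ℝ)
    (hsum : Summable (fun n : ℕ => r ^ n * ‖b n‖))
    (hlt : ∑' n : ℕ, r ^ n * ‖b n‖ < R) :
    ∀ q : Quaternion ℝ, ‖q‖ < r →
      Summable (fun n : ℕ =>
        q ^ n * PowerSeries.coeff (R := Quaternion ℝ) n
          (bulletComp (PowerSeries.mk a) (PowerSeries.mk b))) := by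
  intro q hq
  have hr : 0 ≤ r := (norm_nonneg q).trans hq.le
  set N := (mk b).normSeries
  set S := ∑' n, r ^ n * ‖b n‖
  have hN0 : ∀ n, 0 ≤ coeff n N := fun n => by simp [N]
  have hNS : ∀ k, HasSum (fun n => r ^ n * coeff n (N ^ k)) (S ^ k) :=
    hasSum_pow_mul_coeff_pow hr hN0 (by simpa [N] using hsum.hasSum)
  have hS0 : 0 ≤ S := tsum_nonneg fun n => mul_nonneg (pow_nonneg hr n) (norm_nonneg _)
  set c : ℕ → ℕ → ℝ := fun k n => r ^ n * coeff n (N ^ k) * ‖a k‖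
  have hc0 : ∀ k n, 0 ≤ c k n := fun k n =>
    mul_nonneg (mul_nonneg (pow_nonneg hr n) (coeff_pow_nonneg hN0 k n)) (norm_nonneg _)
  obtain ⟨hcol, hmaj⟩ := summable_swap_of_nonneg hc0 (fun k => (hNS k).summable.mul_right _)
    (by simpa only [c, ((hNS _).mul_right _).tsum_eq] using
      summable_pow_mul_norm_of_lt hg hS0 hlt)
  refine .of_norm (hmaj.of_nonneg_of_le (fun _ => norm_nonneg _) fun n => ?_)
  exact (norm_pow_mul_coeff_bulletComp_le (mk a) (mk b) hq.le n).trans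
    (by simpa only [coeff_mk] using (hcol n).sum_le_tsum _ fun k _ => hc0 k n)

/-- If `g = ∑ qⁿ aₙ` converges for `‖q‖ < R` and `f = ∑_{n≥1} qⁿ bₙ` converges for
`‖q‖ < ρ`, and `r > 0` satisfies `∑ rⁿ ‖bₙ‖ < R`, then the bullet composition `h = g • f`
(defined coefficientwise) converges for `‖q‖ < r`; in particular it has positive radius
of convergence. -/
theorem stmt11 (a b : ℕ → Quaternion ℝ) (hb0 : b 0 = 0) (R ρ : ℝ) (hR : 0 < R) (hρ : 0 < ρ)
    (hg : ∀ q : Quaternion ℝ, ‖q‖ < R → Summable (fun n : ℕ => q ^ n * a n))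
    (hf : ∀ q : Quaternion ℝ, ‖q‖ < ρ → Summable (fun n : ℕ => q ^ n * b n))
    (r : ℝ) (hr : 0 < r)
    (hsum : Summable (fun n : ℕ => r ^ n * ‖b n‖))
    (hlt : ∑' n : ℕ, r ^ n * ‖b n‖ < R) :
    ∀ q : Quaternion ℝ, ‖q‖ < r →
      Summable (fun n : ℕ =>
        q ^ n * PowerSeries.coeff (R := Quaternion ℝ) n
          (bulletComp (PowerSeries.mk a) (PowerSeries.mk b))) :=
  stmt11_general a b R hg r hsum hlt
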